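/- Extended Chernoff bound in expectation (Lemma B.1): let (Ω, p) be a finite probability space and N : Ω → (real symmetric n×n matrices) such that for every ω, 0 ⪯ N ω ⪯ r • I for some fixed r > 0. Then for every real θ, ∑ ω, p ω • exp(θ • N ω) ⪯ exp(((exp(r·θ) − 1)/r) • (∑ ω, p ω • N ω)), where exp denotes the matrix exponential and ⪯ the positive semidefinite (Loewner) order. -/

import Mathlib

open Matrix BigOperators

section aux

variable {n : ℕ}

private lemma psd_smul {M : Matrix (Fin n) (Fin n) ℝ} (hM : M.PosSemidef) {c : ℝ}
    (hc : 0 ≤ c) : (c • M).PosSemidef := by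
  refine .of_dotProduct_mulVec_nonneg ?_ (fun x => ?_)
  · unfold Matrix.IsHermitian
    rw [conjTranspose_smul, hM.1.eq]
    simp
  · rw [smul_mulVec, dotProduct_smul, smul_eq_mul]
    exact mul_nonneg hc (hM.dotProduct_mulVec_nonneg x)

private lemma psd_sum {Ω : Type} [Fintype Ω] (f : Ω → Matrix (Fin n) (Fin n) ℝ)
    (h : ∀ a, (f a).PosSemidef) : (∑ a, f a).PosSemidef := by
  classical
  exact Finset.sum_induction f _ (fun x y hx hy => hx.add hy) Matrix.PosSemidef.zero
    (fun a _ => h a)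

/-- Spectral decomposition of `exp (t • A) - (c₀ • 1 + c₁ • A)`. -/
private lemma spectral_comb {A : Matrix (Fin n) (Fin n) ℝ} (hA : A.IsHermitian)
    (t c₀ c₁ : ℝ) :
    NormedSpace.exp (t • A) - (c₀ • (1 : Matrix (Fin n) (Fin n) ℝ) + c₁ • A) =
      (hA.eigenvectorUnitary : Matrix (Fin n) (Fin n) ℝ) *
        diagonal (fun i => Real.exp (t * hA.eigenvalues i) - (c₀ + c₁ * hA.eigenvalues i)) *
        star (hA.eigenvectorUnitary : Matrix (Fin n) (Fin n) ℝ) := by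
  set U : Matrix (Fin n) (Fin n) ℝ := (hA.eigenvectorUnitary : Matrix (Fin n) (Fin n) ℝ) with hU
  have hUU : U * star U = 1 := Matrix.mem_unitaryGroup_iff.mp hA.eigenvectorUnitary.2
  have hUinv : U⁻¹ = star U := Matrix.inv_eq_right_inv hUU
  have hUunit : IsUnit U := Matrix.isUnit_iff_isUnit_det U |>.mpr
    (Matrix.isUnit_det_of_right_inverse hUU)
  have hspec : A = U * diagonal hA.eigenvalues * star U := by
    have := hA.spectral_theorem
    rw [RCLike.ofReal_real_eq_id] at this
    simpa using this
  have hsmul : ∀ s : ℝ, s • A = U * diagonal (fun i => s * hA.eigenvalues i) * star U := by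
    intro s
    have hfun : (fun i => s * hA.eigenvalues i) = s • hA.eigenvalues := rfl
    rw [hfun, diagonal_smul, mul_smul_comm, smul_mul_assoc, ← hspec]
  -- compute exp (t • A)
  have hexp : NormedSpace.exp (t • A) =
      U * diagonal (fun i => Real.exp (t * hA.eigenvalues i)) * star U := by
    have h1 : t • A = U * diagonal (fun i => t * hA.eigenvalues i) * U⁻¹ := by
      rw [hUinv]; exact hsmul t
    rw [h1, Matrix.exp_conj U _ hUunit, Matrix.exp_diagonal, hUinv]
    have h2 : NormedSpace.exp (fun i => t * hA.eigenvalues i)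
        = fun i => Real.exp (t * hA.eigenvalues i) := by
      rw [Pi.exp_def]
      funext i
      exact (congrFun Real.exp_eq_exp_ℝ _).symm
    rw [h2]
  have hone : c₀ • (1 : Matrix (Fin n) (Fin n) ℝ) =
      U * diagonal (fun _ : Fin n => c₀) * star U := by
    rw [← Matrix.smul_one_eq_diagonal]
    rw [Matrix.mul_smul, Matrix.smul_mul, mul_one, hUU]
  have hA' : c₁ • A = U * diagonal (fun i => c₁ * hA.eigenvalues i) * star U :=
    hsmul c₁
  rw [hexp, hone, hA']
  rw [← Matrix.add_mul, ← Matrix.mul_add, ← Matrix.sub_mul, ← Matrix.mul_sub,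
    diagonal_add, diagonal_sub]

private lemma psd_comb_ge {A : Matrix (Fin n) (Fin n) ℝ} (hA : A.IsHermitian)
    (t c₀ c₁ : ℝ) (h : ∀ i, c₀ + c₁ * hA.eigenvalues i ≤ Real.exp (t * hA.eigenvalues i)) :
    (NormedSpace.exp (t • A) - (c₀ • (1 : Matrix (Fin n) (Fin n) ℝ) + c₁ • A)).PosSemidef := by
  rw [spectral_comb hA t c₀ c₁]
  have hd : (diagonal (fun i => Real.exp (t * hA.eigenvalues i)
      - (c₀ + c₁ * hA.eigenvalues i))).PosSemidef :=
    Matrix.posSemidef_diagonal_iff.mpr fun i => sub_nonneg.mpr (h i)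
  exact hd.mul_mul_conjTranspose_same _

private lemma psd_comb_le {A : Matrix (Fin n) (Fin n) ℝ} (hA : A.IsHermitian)
    (t c₀ c₁ : ℝ) (h : ∀ i, Real.exp (t * hA.eigenvalues i) ≤ c₀ + c₁ * hA.eigenvalues i) :
    ((c₀ • (1 : Matrix (Fin n) (Fin n) ℝ) + c₁ • A) - NormedSpace.exp (t • A)).PosSemidef := by
  have := spectral_comb hA t c₀ c₁
  have h2 : (c₀ • (1 : Matrix (Fin n) (Fin n) ℝ) + c₁ • A) - NormedSpace.exp (t • A) =
      (hA.eigenvectorUnitary : Matrix (Fin n) (Fin n) ℝ) *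
        diagonal (fun i => (c₀ + c₁ * hA.eigenvalues i) - Real.exp (t * hA.eigenvalues i)) *
        star (hA.eigenvectorUnitary : Matrix (Fin n) (Fin n) ℝ) := by
    have hneg : (c₀ • (1 : Matrix (Fin n) (Fin n) ℝ) + c₁ • A) - NormedSpace.exp (t • A) =
        -(NormedSpace.exp (t • A) - (c₀ • (1 : Matrix (Fin n) (Fin n) ℝ) + c₁ • A)) := by
      abel
    have hD : diagonal (fun i => (c₀ + c₁ * hA.eigenvalues i) - Real.exp (t * hA.eigenvalues i))
        = -(diagonal (fun i => Real.exp (t * hA.eigenvalues i)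
            - (c₀ + c₁ * hA.eigenvalues i))) := by
      rw [diagonal_neg]
      exact congrArg diagonal (funext fun i => by ring)
    rw [hneg, spectral_comb hA t c₀ c₁, hD, Matrix.mul_neg, Matrix.neg_mul]
  rw [h2]
  have hd : (diagonal (fun i => (c₀ + c₁ * hA.eigenvalues i)
      - Real.exp (t * hA.eigenvalues i))).PosSemidef :=
    Matrix.posSemidef_diagonal_iff.mpr fun i => sub_nonneg.mpr (h i)
  exact hd.mul_mul_conjTranspose_same _

/-- eigenvalue upper bound from `r • 1 - A ⪰ 0`. -/
private lemma eigenvalues_le {A : Matrix (Fin n) (Fin n) ℝ} (hA : A.IsHermitian) {r : ℝ}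
    (hr : (r • (1 : Matrix (Fin n) (Fin n) ℝ) - A).PosSemidef) (i : Fin n) :
    hA.eigenvalues i ≤ r := by
  set v : Fin n → ℝ := ⇑(hA.eigenvectorBasis i) with hv
  have hnorm : ‖hA.eigenvectorBasis i‖ = 1 := hA.eigenvectorBasis.orthonormal.1 i
  have hvv : star v ⬝ᵥ v = 1 := by
    have h1 : star v ⬝ᵥ v = ∑ j, v j * v j := by
      simp [dotProduct, star, mul_comm]
    have h2 : ‖hA.eigenvectorBasis i‖ ^ 2 = ∑ j, v j * v j := by
      rw [EuclideanSpace.norm_eq]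
      rw [Real.sq_sqrt (by positivity)]
      congr 1
      ext j
      rw [Real.norm_eq_abs, ← sq, sq_abs, pow_two]
    rw [h1, ← h2, hnorm, one_pow]
  have hAv : A *ᵥ v = hA.eigenvalues i • v := hA.mulVec_eigenvectorBasis i
  have hq := hr.dotProduct_mulVec_nonneg v
  rw [Matrix.sub_mulVec, Matrix.smul_mulVec, Matrix.one_mulVec, hAv,
    dotProduct_sub, dotProduct_smul, dotProduct_smul, hvv] at hq
  simp only [smul_eq_mul, mul_one] at hq
  linarith

end aux

/-- Extended Chernoff bound in expectation (Lemma B.1): if `0 ⪯ N ω ⪯ r • I` for all `ω`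
with `r > 0`, then for every `θ`,
`E[exp(θ • N)] ⪯ exp(((exp(rθ) − 1)/r) • E[N])`. -/
theorem extended_chernoff_expectation {n : ℕ} (Ω : Type) [Fintype Ω] [Nonempty Ω]
    (p : Ω → ℝ) (hp : ∀ a, 0 ≤ p a) (hp1 : ∑ a, p a = 1)
    (N : Ω → Matrix (Fin n) (Fin n) ℝ) (r : ℝ) (hr : 0 < r)
    (hNpsd : ∀ a, (N a).PosSemidef)
    (hNr : ∀ a, (r • (1 : Matrix (Fin n) (Fin n) ℝ) - N a).PosSemidef)
    (θ : ℝ) :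
    (NormedSpace.exp (((Real.exp (r * θ) - 1) / r) • ∑ a, p a • N a)
      - ∑ a, p a • NormedSpace.exp (θ • N a)).PosSemidef := by
  classical
  set c : ℝ := (Real.exp (r * θ) - 1) / r with hc
  set S : Matrix (Fin n) (Fin n) ℝ := ∑ a, p a • N a with hSdef
  -- scalar inequality: for x ∈ [0, r], exp (θ x) ≤ 1 + c x
  have key : ∀ x : ℝ, 0 ≤ x → x ≤ r → Real.exp (θ * x) ≤ 1 + c * x := by
    intro x hx0 hxr
    have ha : (0:ℝ) ≤ 1 - x / r := by
      rw [sub_nonneg, div_le_one hr]; exact hxr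
    have hb : (0:ℝ) ≤ x / r := div_nonneg hx0 hr.le
    have hab : (1 - x / r) + x / r = 1 := by ring
    have hcvx := convexOn_exp.2 (Set.mem_univ (0:ℝ)) (Set.mem_univ (r * θ)) ha hb hab
    have harg : (1 - x / r) • (0:ℝ) + (x / r) • (r * θ) = θ * x := by
      field_simp
      rw [smul_eq_mul, smul_eq_mul, mul_zero, zero_add, div_mul_eq_mul_div, mul_comm r θ,
        ← mul_assoc, mul_div_assoc, div_self hr.ne', mul_one]
    rw [harg] at hcvx
    calc Real.exp (θ * x) ≤ (1 - x / r) * Real.exp 0 + (x / r) * Real.exp (r * θ) := hcvx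
      _ = 1 + c * x := by
          rw [Real.exp_zero, hc]
          field_simp
          ring
  -- per-ω matrix inequality
  have step1 : ∀ a, ((1 : ℝ) • (1 : Matrix (Fin n) (Fin n) ℝ) + c • N a
      - NormedSpace.exp (θ • N a)).PosSemidef := by
    intro a
    have hA := (hNpsd a).1
    have h := psd_comb_le hA θ 1 c (fun i => by
      have h1 := (hNpsd a).eigenvalues_nonneg i
      have h2 := eigenvalues_le hA (hNr a) i
      simpa using key _ h1 h2)
    simpa [add_sub_assoc] using h
  -- sum them up with weights
  have hsum : ((1 : ℝ) • (1 : Matrix (Fin n) (Fin n) ℝ) + c • S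
      - ∑ a, p a • NormedSpace.exp (θ • N a)).PosSemidef := by
    have heq : (1 : ℝ) • (1 : Matrix (Fin n) (Fin n) ℝ) + c • S
        - ∑ a, p a • NormedSpace.exp (θ • N a)
        = ∑ a, p a • ((1 : ℝ) • (1 : Matrix (Fin n) (Fin n) ℝ) + c • N a
            - NormedSpace.exp (θ • N a)) := by
      have e1 : ∑ a, p a • ((1:ℝ) • (1 : Matrix (Fin n) (Fin n) ℝ))
          = (1:ℝ) • (1 : Matrix (Fin n) (Fin n) ℝ) := by
        simp only [smul_smul, mul_one, ← Finset.sum_smul, hp1]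
      have e2 : ∑ a, p a • (c • N a) = c • S := by
        rw [hSdef, Finset.smul_sum]
        exact Finset.sum_congr rfl fun a _ => smul_comm _ _ _
      simp only [smul_sub, Finset.sum_sub_distrib, smul_add, Finset.sum_add_distrib, e1, e2]
    rw [heq]
    exact psd_sum _ (fun a => psd_smul (step1 a) (hp a))
  -- S is hermitian
  have hS : S.IsHermitian := by
    rw [hSdef]
    unfold Matrix.IsHermitian
    rw [conjTranspose_sum]
    congr 1; ext a
    rw [conjTranspose_smul, (hNpsd a).1.eq]
    simp
  -- 1 + c • S ⪯ exp (c • S)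
  have step2 : (NormedSpace.exp (c • S)
      - ((1:ℝ) • (1 : Matrix (Fin n) (Fin n) ℝ) + c • S)).PosSemidef :=
    psd_comb_ge hS c 1 c (fun i => by
      have := Real.add_one_le_exp (c * hS.eigenvalues i)
      linarith)
  -- combine
  have hfinal : NormedSpace.exp (c • S) - ∑ a, p a • NormedSpace.exp (θ • N a)
      = (NormedSpace.exp (c • S) - ((1:ℝ) • (1 : Matrix (Fin n) (Fin n) ℝ) + c • S))
        + ((1:ℝ) • (1 : Matrix (Fin n) (Fin n) ℝ) + c • S
          - ∑ a, p a • NormedSpace.exp (θ • N a)) := by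
    abel
  rw [hfinal]
  exact step2.add hsum
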